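/- Let λ_0 ≥ 0 be a real number and define λ_i = 2λ_{i-1} + λ_{i-1}^{3/2} for i ≥ 1. If k·2^{k/2+1}·λ_0^{1/2} ≤ ln 2 (equivalently, if λ_0 is small enough that the correction factor exp(2k·2^{k/2}·λ_0^{1/2}) ≤ 2), then λ_i ≤ 2^{i+1}·λ_0 for all 0 ≤ i ≤ k. -/
import Mathlib


/-- If `lam 0 ≥ 0`, `lam (i+1) = 2·lam i + (lam i)^{3/2}`, and
`k · 2^{k/2+1} · (lam 0)^{1/2} ≤ ln 2`, then `lam i ≤ 2^{i+1} · lam 0` for all `i ≤ k`. -/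
theorem stmt0 (k : ℕ) (lam : ℕ → ℝ)
    (h0 : 0 ≤ lam 0)
    (hrec : ∀ i, lam (i + 1) = 2 * lam i + lam i ^ ((3 : ℝ) / 2))
    (hsmall : (k : ℝ) * 2 ^ ((k : ℝ) / 2 + 1) * lam 0 ^ ((1 : ℝ) / 2) ≤ Real.log 2) :
    ∀ i ≤ k, lam i ≤ 2 ^ (i + 1) * lam 0 := by
  have h2 : (1:ℝ) < 2 := one_lt_two
  set s : ℝ := 2 ^ (((k:ℝ)+1)/2) * lam 0 ^ ((1:ℝ)/2) with hs
  have hs0 : 0 ≤ s := mul_nonneg (Real.rpow_nonneg (by norm_num) _) (Real.rpow_nonneg h0 _)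
  have hnn : ∀ i, 0 ≤ lam i := by
    intro i; induction i with
    | zero => exact h0
    | succ n ih =>
      rw [hrec]
      have := Real.rpow_nonneg ih ((3:ℝ)/2)
      linarith
  have hks : (k:ℝ) * (s/2) ≤ Real.log 2 := by
    have h1 : (2:ℝ) ^ (((k:ℝ)+1)/2) ≤ 2 ^ ((k:ℝ)/2 + 1) :=
      Real.rpow_le_rpow_of_exponent_le (le_of_lt h2) (by linarith)
    have hl0 : 0 ≤ lam 0 ^ ((1:ℝ)/2) := Real.rpow_nonneg h0 _
    have hk0 : (0:ℝ) ≤ (k:ℝ) := Nat.cast_nonneg k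
    nlinarith [mul_le_mul_of_nonneg_left (mul_le_mul_of_nonneg_right h1 hl0) hk0]
  have hexp : ∀ i ≤ k, ((1:ℝ) + s/2)^i ≤ 2 := by
    intro i hik
    have h1e : (1:ℝ) + s/2 ≤ Real.exp (s/2) := by
      have := Real.add_one_le_exp (s/2); linarith
    calc ((1:ℝ)+s/2)^i ≤ (Real.exp (s/2))^i :=
          pow_le_pow_left₀ (by linarith) h1e i
      _ = Real.exp ((i:ℝ) * (s/2)) := by rw [← Real.exp_nat_mul]
      _ ≤ Real.exp (Real.log 2) := by
          apply Real.exp_le_exp.mpr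
          have hik' : (i:ℝ) ≤ (k:ℝ) := Nat.cast_le.mpr hik
          have : (i:ℝ) * (s/2) ≤ (k:ℝ) * (s/2) :=
            mul_le_mul_of_nonneg_right hik' (by linarith)
          linarith
      _ = 2 := Real.exp_log two_pos
  have key : ∀ i ≤ k, lam i ≤ 2^i * lam 0 * (1+s/2)^i := by
    intro i hik
    induction i with
    | zero => simp [h0]
    | succ n ih =>
      have hnk : n ≤ k := Nat.le_of_succ_le hik
      have ihn := ih hnk
      have hlam_n : lam n ≤ 2^(n+1) * lam 0 := by
        have he := hexp n hnk
        calc lam n ≤ 2^n*lam 0*(1+s/2)^n := ihn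
          _ ≤ 2^n*lam 0*2 := mul_le_mul_of_nonneg_left he (by positivity)
          _ = 2^(n+1)*lam 0 := by ring
      have hsqrt : lam n ^ ((1:ℝ)/2) ≤ s := by
        calc lam n ^ ((1:ℝ)/2) ≤ ((2:ℝ)^(n+1)*lam 0) ^ ((1:ℝ)/2) :=
              Real.rpow_le_rpow (hnn n) hlam_n (by norm_num)
          _ = (2:ℝ)^(((n:ℝ)+1)/2) * lam 0 ^ ((1:ℝ)/2) := by
              rw [Real.mul_rpow (by positivity) h0]
              congr 1
              rw [show ((2:ℝ)^(n+1)) = (2:ℝ)^(((n+1:ℕ)):ℝ) from (Real.rpow_natCast 2 (n+1)).symm,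
                ← Real.rpow_mul (by norm_num)]
              push_cast
              ring_nf
          _ ≤ s := by
              apply mul_le_mul_of_nonneg_right _ (Real.rpow_nonneg h0 _)
              apply Real.rpow_le_rpow_of_exponent_le (le_of_lt h2)
              have : (n:ℝ) ≤ (k:ℝ) := Nat.cast_le.mpr hnk
              linarith
      have h32 : lam n ^ ((3:ℝ)/2) = lam n * lam n ^ ((1:ℝ)/2) := by
        rw [show (3:ℝ)/2 = 1 + 1/2 by norm_num, Real.rpow_add' (hnn n) (by norm_num),
          Real.rpow_one]
      calc lam (n+1) = 2*lam n + lam n * lam n ^ ((1:ℝ)/2) := by rw [hrec, h32]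
        _ ≤ 2*lam n + lam n * s := by nlinarith [hnn n, hsqrt]
        _ = lam n * (2*(1+s/2)) := by ring
        _ ≤ (2^n*lam 0*(1+s/2)^n) * (2*(1+s/2)) :=
            mul_le_mul_of_nonneg_right ihn (by nlinarith)
        _ = 2^(n+1)*lam 0*(1+s/2)^(n+1) := by ring
  intro i hik
  calc lam i ≤ 2^i*lam 0*(1+s/2)^i := key i hik
    _ ≤ 2^i*lam 0*2 := mul_le_mul_of_nonneg_left (hexp i hik) (by positivity)
    _ = 2^(i+1)*lam 0 := by ring
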